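/- arXiv:1907.11967 — 3 statements merged into one kernel-verified Lean document; each statement's English description precedes it below -/
import Mathlib

section
/- Let q∈(2,3). For any t∈T with q-expansion (t_i)∈Ω2^ℕ (i.e., t=∑_{i=1}^∞ t_i/q^i with all t_i∈Ω2), the Hausdorff dimension of E∩(E+t) equals (log 3/log q)·d((t_i)). -/
open scoped Pointwise ENNReal
open Filter

noncomputable section

/-- The digit set Ω₁ = {(0,0),(0,1),(1,0)} ⊆ ℝ². -/
def Omega1 : Set (ℝ × ℝ) := {((0:ℝ), (0:ℝ)), (0, 1), (1, 0)}

/-- The digit set Ω₂ = Ω₁ − Ω₁ ⊆ ℝ². -/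
def Omega2 : Set (ℝ × ℝ) :=
  {((0:ℝ), (0:ℝ)), (0, 1), (1, 0), (-1, 0), (-1, 1), (0, -1), (1, -1)}

/-- The Sierpinski gasket in base `q`. -/
def gasket (q : ℝ) : Set (ℝ × ℝ) :=
  {x | ∃ c : ℕ → ℝ × ℝ, (∀ i, c i ∈ Omega1) ∧ x = ∑' i, (q ^ (i + 1))⁻¹ • c i}

/-- `U_q`: points of `[-1/(q-1), 1/(q-1)]` having a unique `q`-expansion over `{-1,0,1}`. -/
def uniqSet (q : ℝ) : Set ℝ :=
  {s | s ∈ Set.Icc (-(1 / (q - 1))) (1 / (q - 1)) ∧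
    ∃! t : ℕ → ℝ, (∀ i, t i ∈ ({-1, 0, 1} : Set ℝ)) ∧ s = ∑' i, t i / q ^ (i + 1)}

/-- The set `T`. -/
def Tset (q : ℝ) : Set (ℝ × ℝ) :=
  {t | t ∈ gasket q - gasket q ∧ t.1 ∈ uniqSet q ∧ t.2 ∈ uniqSet q}

/-- The set `D_q` of Hausdorff dimensions of intersections. -/
def Dset (q : ℝ) : Set ℝ≥0∞ :=
  {d | ∃ t ∈ Tset q, d = dimH (gasket q ∩ ((· + t) '' gasket q))}

/-- The words `w_n` over `{0,1,2}`: `klWord 0 = w₁ = 2`,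
`w_{n+1} = (w_n ⟨reflection of w_n⟩)⁺`. -/
def klWord : ℕ → List ℕ
  | 0 => [2]
  | n + 1 =>
    let w := klWord n ++ (klWord n).map (fun x => 2 - x)
    w.dropLast ++ [w.getLast?.getD 0 + 1]

/-- `isKLBase n p`: `p ∈ (2,3)` and `1` has (greedy) expansion `w_n 0^∞` in base `p`
w.r.t. `{0,1,2}`, i.e. `p = q_n`. -/
def isKLBase (n : ℕ) (p : ℝ) : Prop :=
  p ∈ Set.Ioo (2 : ℝ) 3 ∧
    (1 : ℝ) = ∑ i ∈ Finset.range (klWord (n - 1)).length,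
      ((klWord (n - 1)).getD i 0 : ℝ) / p ^ (i + 1)

/-- `1` has a unique expansion in base `p` w.r.t. the digit set `{0,1,2}`. -/
def uniqueOneExp (p : ℝ) : Prop :=
  ∃! c : ℕ → ℕ, (∀ i, c i ≤ 2) ∧ (1 : ℝ) = ∑' i, (c i : ℝ) / p ^ (i + 1)

/-- The Thue–Morse sequence. -/
def tm : ℕ → ℕ
  | 0 => 0
  | n + 1 => if (n + 1) % 2 = 0 then tm ((n + 1) / 2) else 1 - tm ((n + 1) / 2)
decreasing_by all_goals omega

/-- `λ_i = τ_i − τ_{i−1}` (for `i ≥ 1`). -/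
def lam (i : ℕ) : ℤ := (tm i : ℤ) - (tm (i - 1) : ℤ)

/-- The word `ε_n = λ₁ ⋯ λ_{2^n}`. -/
def eps (n : ℕ) : List ℤ := (List.range (2 ^ n)).map fun i => lam (i + 1)

/-- Reflection of a word over `{-1,0,1}`: each digit `x` is replaced by `-x`. -/
def reflect (w : List ℤ) : List ℤ := w.map fun x => -x

/-- `w⁺`: the last digit is increased by `1`. -/
def plusOne (w : List ℤ) : List ℤ := w.dropLast ++ [w.getLast?.getD 0 + 1]

/-- `w⁻`: the last digit is decreased by `1`. -/
def minusOne (w : List ℤ) : List ℤ := w.dropLast ++ [w.getLast?.getD 0 - 1]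

/-- The periodic sequence `w^∞` (the `(j+1)`-st term is `per w j`). -/
def per (w : List ℤ) : ℕ → ℤ := fun j => w.getD (j % w.length) 0

/-- `EndsWith x s`: the sequence `x` ends with (has tail) the sequence `s`. -/
def EndsWith {α : Type*} (x s : ℕ → α) : Prop := ∃ k, ∀ j, x (j + k) = s j

/-- The digit set Ω₂ as a subset of ℤ × ℤ. -/
def Omega2Z : Set (ℤ × ℤ) :=
  {((0:ℤ), (0:ℤ)), (0, 1), (1, 0), (-1, 0), (-1, 1), (0, -1), (1, -1)}

/-- `E_{n,m}^i = (σ^i((ε_n ε̄_n)^∞), (ε_m ε̄_m)^∞)` (the `(j+1)`-st term is `Eseq n m i j`). -/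
def Eseq (n m i : ℕ) : ℕ → ℤ × ℤ := fun j =>
  (per (eps n ++ reflect (eps n)) (j + i), per (eps m ++ reflect (eps m)) j)


/-- `A_k = a₁ ⋯ a_{2^k}` where `a_i = λ_{2i−1}`. -/
def Aword (k : ℕ) : List ℤ := (List.range (2 ^ k)).map fun i => lam (2 * i + 1)

/-- `D_{k,k}^i = (σ^i((A_k Ā_k)^∞), (A_k Ā_k)^∞)`. -/
def Dseq (k i : ℕ) : ℕ → ℤ × ℤ := fun j =>
  (per (Aword k ++ reflect (Aword k)) (j + i), per (Aword k ++ reflect (Aword k)) j)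

/-- `U_q'`: the set of sequences over `{-1,0,1}` which are the unique `q`-expansion
of the number they represent. -/
def uniqSeqSet (q : ℝ) : Set (ℕ → ℤ) :=
  {t | (∀ i, t i ∈ ({-1, 0, 1} : Set ℤ)) ∧
    ∀ s : ℕ → ℤ, (∀ i, s i ∈ ({-1, 0, 1} : Set ℤ)) →
      (∑' i, (s i : ℝ) / q ^ (i + 1)) = (∑' i, (t i : ℝ) / q ^ (i + 1)) → s = t}

/-- `ε_{n-1} ε̄_{n-1}`, with the convention `ε_{-1} ε̄_{-1} := 00`. -/
def epsPair : ℕ → List ℤ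
  | 0 => [0, 0]
  | n + 1 => eps n ++ reflect (eps n)

/-- The finite prefix
`(ε_0 ε̄_0)^{j_0} (ε_0 ε̄_1)^{l_0} ⋯ (ε_{M-1} ε̄_{M-1})^{j_{M-1}} (ε_{M-1} ε̄_M)^{l_{M-1}}`. -/
def blockJL (j l : ℕ → ℕ) : ℕ → List ℤ
  | 0 => []
  | M + 1 => blockJL j l M
      ++ (List.replicate (j M) (eps M ++ reflect (eps M))).flatten
      ++ (List.replicate (l M) (eps M ++ reflect (eps (M + 1)))).flatten

/-- The tail of `t` starting at some position `k` follows the pattern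
`(ε_0 ε̄_0)^{j_0}(ε_0 ε̄_1)^{l_0}(ε_1 ε̄_1)^{j_1}(ε_1 ε̄_2)^{l_1}⋯`. -/
def TailFollows (t : ℕ → ℤ) (j l : ℕ → ℕ) : Prop :=
  ∃ k, ∀ M, ∀ i < (blockJL j l M).length, t (i + k) = (blockJL j l M).getD i 0

/-- As `TailFollows`, but for the reflection of the pattern. -/
def TailFollowsRefl (t : ℕ → ℤ) (j l : ℕ → ℕ) : Prop :=
  ∃ k, ∀ M, ∀ i < (blockJL j l M).length, t (i + k) = -(blockJL j l M).getD i 0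

/-- `a_n = 0 λ₁ ⋯ λ_{2^n−1}`. -/
def aword (n : ℕ) : List ℤ := 0 :: ((List.range (2 ^ n - 1)).map fun i => lam (i + 1))

/-- `b_n = (−1) λ₁ ⋯ λ_{2^n−1}`. -/
def bword (n : ℕ) : List ℤ := (-1) :: ((List.range (2 ^ n - 1)).map fun i => lam (i + 1))

/-- The transitions allowed by the matrix `A` on the alphabet `{a_n, b_n, ā_n, b̄_n}`:
`a→b, a→ā, b→ā, ā→a, ā→b̄, b̄→a`. -/
def allowedTrans (n : ℕ) (u v : List ℤ) : Prop :=
  (u = aword n ∧ (v = bword n ∨ v = reflect (aword n))) ∨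
  (u = bword n ∧ v = reflect (aword n)) ∨
  (u = reflect (aword n) ∧ (v = aword n ∨ v = reflect (bword n))) ∨
  (u = reflect (bword n) ∧ v = aword n)

/-!
Because `t.1` and `t.2` have unique expansions over `{-1, 0, 1}`, a point `∑ cᵢ q⁻ⁱ` of `E`
(`cᵢ ∈ Ω₁`) lies in `E + t` exactly when `cᵢ - tᵢ ∈ Ω₁` for all `i`. For `tᵢ ≠ 0` this pins
`cᵢ` down, and for `tᵢ = 0` all three digits are allowed, so `E ∩ (E + t)` is a Moran set with
three free choices at the zeros of `(tᵢ)`. As `q > 2` and the vertices of `Ω₁` are pairwise at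
sup-distance `1`, two codings first differing at level `m` give points at distance comparable
to `q⁻ᵐ`. Covering by the `3 ^ #{i < n | tᵢ = 0}` cylinders of level `n` gives the upper bound;
reading the free digits as a ternary expansion gives a map onto `[0, 1]` that is Hölder with
every exponent below `(log 3 / log q) · d((tᵢ))`, which gives the lower bound.
-/

open MeasureTheory Topology Function
open scoped NNReal Count

section Expansion

variable {E : Type*} [NormedAddCommGroup E] [NormedSpace ℝ E] {q B : ℝ} {u w : ℕ → E}

def expansion (q : ℝ) (u : ℕ → E) : E := ∑' i, (q ^ (i + 1))⁻¹ • u i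

lemma expansion_eq_tsum_div (q : ℝ) (u : ℕ → ℝ) : expansion q u = ∑' i, u i / q ^ (i + 1) := by
  simp only [expansion, smul_eq_mul, inv_mul_eq_div]

lemma hasSum_inv_pow_succ (hq : 1 < q) : HasSum (fun i : ℕ => (q ^ (i + 1))⁻¹) (q - 1)⁻¹ := by
  have hq0 : 0 < q := one_pos.trans hq
  have h := (hasSum_geometric_of_lt_one (inv_nonneg.2 hq0.le) (inv_lt_one_of_one_lt₀ hq)).mul_left
    q⁻¹
  have hfun : (fun i : ℕ => (q ^ (i + 1))⁻¹) = fun i => q⁻¹ * q⁻¹ ^ i := by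
    ext i; rw [pow_succ', mul_inv, inv_pow]
  have hsum : (q - 1)⁻¹ = q⁻¹ * (1 - q⁻¹)⁻¹ := by
    rw [← mul_inv, mul_sub, mul_one, mul_inv_cancel₀ hq0.ne']
  rwa [hfun, hsum]

lemma norm_expansion_le (hq : 1 < q) (hu : ∀ i, ‖u i‖ ≤ B) :
    ‖expansion q u‖ ≤ B / (q - 1) := by
  have h := (hasSum_inv_pow_succ hq).mul_right B
  rw [inv_mul_eq_div] at h
  refine tsum_of_norm_bounded h fun i => ?_
  rw [norm_smul, norm_inv, norm_pow, Real.norm_of_nonneg (one_pos.trans hq).le]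
  exact mul_le_mul_of_nonneg_left (hu i) (by positivity)

variable [CompleteSpace E]

lemma summable_expansion (hq : 1 < q) (hu : ∀ i, ‖u i‖ ≤ B) :
    Summable fun i => (q ^ (i + 1))⁻¹ • u i := by
  refine .of_norm_bounded ((hasSum_inv_pow_succ hq).summable.mul_right B) fun i => ?_
  rw [norm_smul, norm_inv, norm_pow, Real.norm_of_nonneg (one_pos.trans hq).le]
  exact mul_le_mul_of_nonneg_left (hu i) (by positivity)

lemma expansion_sub (hq : 1 < q) (hu : ∀ i, ‖u i‖ ≤ B) (hw : ∀ i, ‖w i‖ ≤ B) :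
    expansion q (u - w) = expansion q u - expansion q w := by
  simp only [expansion, Pi.sub_apply, smul_sub]
  exact (summable_expansion hq hu).tsum_sub (summable_expansion hq hw)

lemma ContinuousLinearMap.map_expansion {F : Type*} [NormedAddCommGroup F] [NormedSpace ℝ F]
    (L : E →L[ℝ] F) (hq : 1 < q) (hu : ∀ i, ‖u i‖ ≤ B) :
    L (expansion q u) = expansion q fun i => L (u i) := by
  simp only [expansion, L.map_tsum (summable_expansion hq hu), map_smul]

lemma expansion_eq_smul_add (hq : 1 < q) (hu : ∀ i, ‖u i‖ ≤ B) :
    expansion q u = q⁻¹ • (u 0 + expansion q fun i => u (i + 1)) := by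
  rw [expansion, (summable_expansion hq hu).tsum_eq_zero_add, expansion, smul_add,
    ← tsum_const_smul'']
  simp only [pow_succ', zero_add, pow_zero, mul_one, mul_inv, smul_smul]

lemma expansion_eq_pow_smul_of_eq_zero (hq : 1 < q) (hu : ∀ i, ‖u i‖ ≤ B) {n : ℕ}
    (h0 : ∀ i < n, u i = 0) : expansion q u = (q ^ n)⁻¹ • expansion q fun i => u (i + n) := by
  induction n generalizing u with
  | zero => simp
  | succ n ih =>
    rw [expansion_eq_smul_add hq hu, h0 0 n.succ_pos, zero_add,
      ih (fun i => hu (i + 1)) fun i hi => h0 (i + 1) (by omega), smul_smul, ← mul_inv, ← pow_succ']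
    simp only [add_assoc]

lemma norm_expansion_le_of_eq_zero (hq : 1 < q) (hu : ∀ i, ‖u i‖ ≤ 1) {n : ℕ}
    (h0 : ∀ i < n, u i = 0) : ‖expansion q u‖ ≤ ((q - 1) * q ^ n)⁻¹ := by
  have hq0 : 0 < q := one_pos.trans hq
  rw [expansion_eq_pow_smul_of_eq_zero hq hu h0, norm_smul, norm_inv, norm_pow,
    Real.norm_of_nonneg hq0.le, mul_inv, mul_comm (q - 1)⁻¹, inv_eq_one_div (q - 1)]
  gcongr
  exact norm_expansion_le hq fun i => hu (i + n)

lemma le_norm_expansion (hq : 1 < q) (hu : ∀ i, ‖u i‖ ≤ 1) {m : ℕ} (h0 : ∀ i < m, u i = 0)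
    (hm : ‖u m‖ = 1) : (q - 2) / ((q - 1) * q ^ (m + 1)) ≤ ‖expansion q u‖ := by
  have hq0 : 0 < q := one_pos.trans hq
  have hq1 : 0 < q - 1 := sub_pos.2 hq
  set S := expansion q fun i => u (i + 1 + m)
  have hS : ‖S‖ ≤ 1 / (q - 1) := norm_expansion_le hq fun i => hu (i + 1 + m)
  have hlead : 1 - 1 / (q - 1) ≤ ‖u m + S‖ := by
    have := norm_sub_norm_le (u m) (-S)
    rw [sub_neg_eq_add, norm_neg, hm] at this
    linarith
  rw [expansion_eq_pow_smul_of_eq_zero hq hu h0, expansion_eq_smul_add hq fun i => hu (i + m),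
    smul_smul, ← mul_inv, norm_smul, norm_inv, norm_mul, norm_pow, Real.norm_of_nonneg hq0.le]
  calc (q - 2) / ((q - 1) * q ^ (m + 1)) = (q ^ m * q)⁻¹ * (1 - 1 / (q - 1)) := by
        field_simp; ring
    _ ≤ (q ^ m * q)⁻¹ * ‖u (0 + m) + S‖ := by
        rw [zero_add]; gcongr
    _ = _ := by simp only [S, add_assoc, add_comm 1 m]

end Expansion

lemma norm_sub_le_one_of_pairwise {ι G : Type*} [SeminormedAddCommGroup G] {v : ι → G}
    (hv : Pairwise fun a a' => ‖v a - v a'‖ = 1) (a a' : ι) : ‖v a - v a'‖ ≤ 1 := by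
  rcases eq_or_ne a a' with rfl | h
  · simp
  · exact (hv h).le

lemma holderOnWith_of_dist_le {X Y : Type*} [PseudoMetricSpace X] [PseudoMetricSpace Y]
    {C r : ℝ≥0} {f : X → Y} {s : Set X}
    (h : ∀ x ∈ s, ∀ y ∈ s, dist (f x) (f y) ≤ C * dist x y ^ (r : ℝ)) : HolderOnWith C r f s := by
  intro x hx y hy
  rw [edist_dist, edist_dist, ENNReal.ofReal_rpow_of_nonneg dist_nonneg r.coe_nonneg,
    ← ENNReal.ofReal_coe_nnreal, ← ENNReal.ofReal_mul C.coe_nonneg]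
  exact ENNReal.ofReal_le_ofReal (h x hx y hy)

lemma ENNReal.liminf_eq_zero_of_frequently_le {u g : ℕ → ℝ≥0∞} (h : ∃ᶠ n in atTop, u n ≤ g n)
    (hg : Tendsto g atTop (𝓝 0)) : liminf u atTop = 0 := by
  refine nonpos_iff_eq_zero.1 (ENNReal.le_of_forall_pos_le_add fun δ hδ _ => ?_)
  rw [zero_add]
  refine liminf_le_of_frequently_le' ((h.and_eventually (hg.eventually (gt_mem_nhds ?_))).mono
    fun n hn => hn.1.trans hn.2.le)
  exact_mod_cast hδ

lemma natCast_pow_mul_inv_pow_rpow_le {b : ℕ} (hb : 1 ≤ b) {q d s : ℝ} (hq : 0 < q) {c n : ℕ}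
    (hc : (c : ℝ) ≤ s * n) : (b : ℝ) ^ c * ((q ^ n)⁻¹) ^ d ≤ ((b : ℝ) ^ s / q ^ d) ^ n := by
  have hb' : (1 : ℝ) ≤ b := by exact_mod_cast hb
  have hpow : (b : ℝ) ^ c ≤ ((b : ℝ) ^ s) ^ n := by
    rw [← Real.rpow_natCast, ← Real.rpow_natCast, ← Real.rpow_mul (by positivity)]
    exact Real.rpow_le_rpow_of_exponent_le hb' hc
  have hq' : ((q ^ n)⁻¹) ^ d = ((q ^ d) ^ n)⁻¹ := by
    rw [Real.inv_rpow (by positivity), ← Real.rpow_natCast q, ← Real.rpow_mul hq.le, mul_comm,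
      Real.rpow_mul hq.le, Real.rpow_natCast]
  rw [hq', div_pow, div_eq_mul_inv]
  gcongr

section LowerDensity

variable (p : ℕ → Prop) [DecidablePred p]

def lowerDensity : ℝ := liminf (fun n : ℕ => (Nat.count p n : ℝ) / n) atTop

variable {p}

lemma count_div_le_one (n : ℕ) : (Nat.count p n : ℝ) / n ≤ 1 :=
  div_le_one_of_le₀ (by exact_mod_cast Nat.count_le p) n.cast_nonneg

lemma isBoundedUnder_ge_count_div :
    IsBoundedUnder (· ≥ ·) atTop fun n : ℕ => (Nat.count p n : ℝ) / n :=
  isBoundedUnder_of ⟨0, fun n => by positivity⟩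

lemma isCoboundedUnder_ge_count_div :
    IsCoboundedUnder (· ≥ ·) atTop fun n : ℕ => (Nat.count p n : ℝ) / n :=
  (isBoundedUnder_of ⟨1, count_div_le_one⟩).isCoboundedUnder_flip

lemma lowerDensity_nonneg : 0 ≤ lowerDensity p :=
  le_liminf_of_le isCoboundedUnder_ge_count_div (.of_forall fun n => by positivity)

lemma frequently_count_le {s : ℝ} (h : lowerDensity p < s) :
    ∃ᶠ n in atTop, (Nat.count p n : ℝ) ≤ s * n := by
  refine (frequently_lt_of_liminf_lt isCoboundedUnder_ge_count_div h).mono fun n hn => ?_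
  rcases n.eq_zero_or_pos with rfl | hn0
  · simp
  · exact ((div_lt_iff₀ (by exact_mod_cast hn0)).1 hn).le

lemma exists_le_add_count {s : ℝ} (h : s < lowerDensity p) :
    ∃ C, ∀ n : ℕ, s * n ≤ C + Nat.count p n := by
  obtain ⟨N, hN⟩ := eventually_atTop.1
    ((eventually_lt_of_lt_liminf h isBoundedUnder_ge_count_div).and (eventually_gt_atTop 0))
  refine ⟨|s| * N, fun n => ?_⟩
  rcases lt_or_ge n N with hn | hn
  · have : s * n ≤ |s| * N := (mul_le_mul_of_nonneg_right (le_abs_self s) n.cast_nonneg).trans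
      (mul_le_mul_of_nonneg_left (by exact_mod_cast hn.le) (abs_nonneg s))
    linarith [(Nat.count p n).cast_nonneg (α := ℝ)]
  · obtain ⟨hlt, hpos⟩ := hN n hn
    rw [lt_div_iff₀ (by exact_mod_cast hpos)] at hlt
    linarith [mul_nonneg (abs_nonneg s) N.cast_nonneg]

lemma infinite_setOf_of_lowerDensity_pos (h : 0 < lowerDensity p) : {n | p n}.Infinite := by
  intro hfin
  obtain ⟨C, hC⟩ := exists_le_add_count (half_lt_self h)
  have hbdd (n : ℕ) : (Nat.count p n : ℝ) ≤ hfin.toFinset.card := by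
    exact_mod_cast Nat.count_le_card hfin n
  obtain ⟨n, hn⟩ := exists_nat_gt ((C + hfin.toFinset.card) / (lowerDensity p / 2))
  rw [div_lt_iff₀ (half_pos h)] at hn
  linarith [hC n, hbdd n]

lemma inv_pow_count_le {b : ℕ} (hb : 1 < b) {q : ℝ} (hq : 0 < q) {p : ℕ → Prop} [DecidablePred p]
    {r C : ℝ} (hC : ∀ n : ℕ, r * Real.log q / Real.log b * n ≤ C + Nat.count p n) (m : ℕ) :
    ((b : ℝ) ^ Nat.count p m)⁻¹ ≤ (b : ℝ) ^ C * ((q ^ m)⁻¹) ^ r := by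
  have hb0 : (0 : ℝ) < b := by positivity
  have hlogb : 0 < Real.log b := Real.log_pos (by exact_mod_cast hb)
  have hexp : r * Real.log q * m ≤ (C + Nat.count p m) * Real.log b := by
    have := mul_le_mul_of_nonneg_right (hC m) hlogb.le
    rwa [div_mul_eq_mul_div, div_mul_eq_mul_div, mul_div_cancel_right₀ _ hlogb.ne'] at this
  rw [← Real.exp_log (pow_pos hb0 _), Real.rpow_def_of_pos hb0,
    Real.rpow_def_of_pos (by positivity), ← Real.exp_neg, ← Real.exp_add, Real.exp_le_exp,
    Real.log_pow, Real.log_inv, Real.log_pow]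
  linarith

lemma abs_ofDigits_comp_nth_sub_le {b : ℕ} {p : ℕ → Prop} [DecidablePred p] {k k' : ℕ → Fin b}
    {m : ℕ} (h : ∀ i < m, k i = k' i) :
    |Real.ofDigits (fun j => k (Nat.nth p j)) - Real.ofDigits (fun j => k' (Nat.nth p j))| ≤
      ((b : ℝ) ^ Nat.count p m)⁻¹ :=
  Real.abs_ofDigits_sub_ofDigits_le fun _ hj => h _ (Nat.nth_lt_of_lt_count hj)

end LowerDensity

section MoranSet

variable {E : Type*} [NormedAddCommGroup E] [NormedSpace ℝ E] {q : ℝ} {b : ℕ} {v : Fin b → E}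
  {p : ℕ → Prop} {k₀ : ℕ → Fin b}

def moranSet (q : ℝ) (v : Fin b → E) (p : ℕ → Prop) (k₀ : ℕ → Fin b) : Set E :=
  (fun k => expansion q (v ∘ k)) '' {k | ∀ i, ¬ p i → k i = k₀ i}

def moranCylinder (q : ℝ) (v : Fin b → E) (p : ℕ → Prop) (k₀ : ℕ → Fin b) (n : ℕ)
    (f : {i // i < n ∧ p i} → Fin b) : Set E :=
  (fun k => expansion q (v ∘ k)) ''
    {k | (∀ i, ¬ p i → k i = k₀ i) ∧ ∀ i : {i // i < n ∧ p i}, k i = f i}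

lemma moranSet_subset_iUnion_moranCylinder (n : ℕ) :
    moranSet q v p k₀ ⊆ ⋃ f, moranCylinder q v p k₀ n f := by
  rintro _ ⟨k, hk, rfl⟩
  exact Set.mem_iUnion.2 ⟨fun i => k i, k, ⟨hk, fun i => rfl⟩, rfl⟩

lemma card_moranCylinder_index [DecidablePred p] (n : ℕ) :
    Fintype.card ({i // i < n ∧ p i} → Fin b) = b ^ Nat.count p n := by
  rw [Fintype.card_fun, Fintype.card_fin, Nat.count_eq_card_fintype]

variable [CompleteSpace E]

lemma expansion_comp_sub_expansion_comp (hq : 1 < q) (k k' : ℕ → Fin b) :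
    expansion q (v ∘ k) - expansion q (v ∘ k') = expansion q fun i => v (k i) - v (k' i) := by
  have hv : ∀ a, ‖v a‖ ≤ ∑ a', ‖v a'‖ := fun a =>
    Finset.single_le_sum (fun a' _ => norm_nonneg (v a')) (Finset.mem_univ a)
  exact (expansion_sub hq (fun i => hv (k i)) fun i => hv (k' i)).symm

lemma dist_expansion_comp_le (hv : Pairwise fun a a' => ‖v a - v a'‖ = 1) (hq : 1 < q)
    {k k' : ℕ → Fin b} {n : ℕ} (h : ∀ i < n, k i = k' i) :
    dist (expansion q (v ∘ k)) (expansion q (v ∘ k')) ≤ ((q - 1) * q ^ n)⁻¹ := by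
  rw [dist_eq_norm, expansion_comp_sub_expansion_comp hq]
  exact norm_expansion_le_of_eq_zero hq (fun i => norm_sub_le_one_of_pairwise hv _ _)
    fun i hi => by rw [h i hi, sub_self]

lemma le_dist_expansion_comp (hv : Pairwise fun a a' => ‖v a - v a'‖ = 1) (hq : 1 < q)
    {k k' : ℕ → Fin b} (h : k ≠ k') :
    (q - 2) / ((q - 1) * q ^ (PiNat.firstDiff k k' + 1)) ≤
      dist (expansion q (v ∘ k)) (expansion q (v ∘ k')) := by
  rw [dist_eq_norm, expansion_comp_sub_expansion_comp hq]
  exact le_norm_expansion hq (fun i => norm_sub_le_one_of_pairwise hv _ _)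
    (fun i hi => by rw [PiNat.apply_eq_of_lt_firstDiff hi, sub_self])
    (hv (PiNat.apply_firstDiff_ne h))

lemma injective_expansion_comp (hv : Pairwise fun a a' => ‖v a - v a'‖ = 1) (hq : 2 < q) :
    Injective fun k : ℕ → Fin b => expansion q (v ∘ k) := by
  intro k k' (hkk' : expansion q (v ∘ k) = expansion q (v ∘ k'))
  by_contra h
  have := le_dist_expansion_comp hv (by linarith) h
  rw [hkk', dist_self] at this
  have : 0 < (q - 2) / ((q - 1) * q ^ (PiNat.firstDiff k k' + 1)) := by
    have : 0 < q - 2 := by linarith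
    have : 0 < q - 1 := by linarith
    positivity
  linarith

lemma ediam_moranCylinder_le (hv : Pairwise fun a a' => ‖v a - v a'‖ = 1) (hq : 1 < q) (n : ℕ)
    (f : {i // i < n ∧ p i} → Fin b) :
    Metric.ediam (moranCylinder q v p k₀ n f) ≤ ENNReal.ofReal ((q - 1) * q ^ n)⁻¹ := by
  refine Metric.ediam_le ?_
  rintro _ ⟨k, ⟨hk, hkf⟩, rfl⟩ _ ⟨k', ⟨hk', hk'f⟩, rfl⟩
  rw [edist_dist]
  refine ENNReal.ofReal_le_ofReal (dist_expansion_comp_le hv hq fun i hi => ?_)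
  by_cases hpi : p i
  · rw [hkf ⟨i, hi, hpi⟩, hk'f ⟨i, hi, hpi⟩]
  · rw [hk i hpi, hk' i hpi]

lemma ofDigits_invFun_expansion_comp [Nonempty (ℕ → Fin b)]
    (hv : Pairwise fun a a' => ‖v a - v a'‖ = 1) (hq : 2 < q) (k : ℕ → Fin b) :
    Real.ofDigits (fun j => invFun (fun k => expansion q (v ∘ k)) (expansion q (v ∘ k))
      (Nat.nth p j)) = Real.ofDigits fun j => k (Nat.nth p j) := by
  rw [leftInverse_invFun (injective_expansion_comp hv hq) k]

variable [DecidablePred p]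

lemma sum_ediam_moranCylinder_rpow_le (hv : Pairwise fun a a' => ‖v a - v a'‖ = 1) (hq : 1 < q)
    {d : ℝ} (hd : 0 ≤ d) (n : ℕ) :
    ∑ f, Metric.ediam (moranCylinder q v p k₀ n f) ^ d ≤
      ENNReal.ofReal ((b : ℝ) ^ Nat.count p n * (((q - 1) * q ^ n)⁻¹) ^ d) := by
  have hq1 : 0 < q - 1 := sub_pos.2 hq
  calc ∑ f, Metric.ediam (moranCylinder q v p k₀ n f) ^ d
      ≤ ∑ _f : {i // i < n ∧ p i} → Fin b, ENNReal.ofReal ((q - 1) * q ^ n)⁻¹ ^ d :=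
        Finset.sum_le_sum fun f _ => ENNReal.rpow_le_rpow (ediam_moranCylinder_le hv hq n f) hd
    _ = _ := by
        rw [Finset.sum_const, Finset.card_univ, card_moranCylinder_index, nsmul_eq_mul,
          ENNReal.ofReal_mul (by positivity), ENNReal.ofReal_rpow_of_nonneg (by positivity) hd,
          ENNReal.ofReal_pow (by positivity), ENNReal.ofReal_natCast, Nat.cast_pow]

lemma hausdorffMeasure_moranSet_eq_zero [MeasurableSpace E] [BorelSpace E]
    (hv : Pairwise fun a a' => ‖v a - v a'‖ = 1) (hq : 1 < q) (hb : 1 < b) {d : ℝ}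
    (hd : Real.log b / Real.log q * lowerDensity p < d) : μH[d] (moranSet q v p k₀) = 0 := by
  have hq0 : 0 < q := one_pos.trans hq
  have hq1 : 0 < q - 1 := sub_pos.2 hq
  have hlogq : 0 < Real.log q := Real.log_pos hq
  have hlogb : 0 < Real.log b := Real.log_pos (by exact_mod_cast hb)
  have hd0 : 0 < d := (mul_nonneg (div_nonneg hlogb.le hlogq.le) lowerDensity_nonneg).trans_lt hd
  have hLd : lowerDensity p < d * Real.log q / Real.log b := by
    rw [lt_div_iff₀ hlogb]
    rw [div_mul_eq_mul_div, div_lt_iff₀ hlogq] at hd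
    linarith
  obtain ⟨s, hLs, hsd⟩ := exists_between hLd
  -- `ρ < 1` is the per-level decay of the covering sums along the levels where `count p n ≤ s n`
  set ρ := (b : ℝ) ^ s / q ^ d
  have hρ1 : ρ < 1 := by
    rw [div_lt_one (by positivity), Real.rpow_def_of_pos (by positivity), Real.rpow_def_of_pos hq0]
    rw [lt_div_iff₀ hlogb] at hsd
    exact Real.exp_lt_exp.2 (by linarith)
  have hr : Tendsto (fun n : ℕ => ENNReal.ofReal ((q - 1) * q ^ n)⁻¹) atTop (𝓝 0) := by
    rw [← ENNReal.ofReal_zero]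
    refine ENNReal.tendsto_ofReal (tendsto_inv_atTop_zero.comp ?_)
    exact (tendsto_pow_atTop_atTop_of_one_lt hq).const_mul_atTop hq1
  have hg : Tendsto (fun n : ℕ => ENNReal.ofReal (((q - 1) ^ d)⁻¹ * ρ ^ n)) atTop (𝓝 0) := by
    rw [← ENNReal.ofReal_zero, ← mul_zero ((q - 1) ^ d)⁻¹]
    exact ENNReal.tendsto_ofReal
      ((tendsto_pow_atTop_nhds_zero_of_lt_one (by positivity) hρ1).const_mul _)
  refine nonpos_iff_eq_zero.1 <| (Measure.hausdorffMeasure_le_liminf_sum d _ _ hr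
    (moranCylinder q v p k₀) (.of_forall (ediam_moranCylinder_le hv hq))
    (.of_forall moranSet_subset_iUnion_moranCylinder)).trans_eq
    (ENNReal.liminf_eq_zero_of_frequently_le ((frequently_count_le hLs).mono fun n hn => ?_) hg)
  refine (sum_ediam_moranCylinder_rpow_le hv hq hd0.le n).trans (ENNReal.ofReal_le_ofReal ?_)
  rw [mul_inv, Real.mul_rpow (by positivity) (by positivity), Real.inv_rpow hq1.le,
    mul_left_comm]
  exact mul_le_mul_of_nonneg_left (natCast_pow_mul_inv_pow_rpow_le hb.le hq0 hn) (by positivity)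

lemma dimH_moranSet_le (hv : Pairwise fun a a' => ‖v a - v a'‖ = 1) (hq : 1 < q) (hb : 1 < b) :
    dimH (moranSet q v p k₀) ≤ ENNReal.ofReal (Real.log b / Real.log q * lowerDensity p) := by
  borelize E
  refine dimH_le fun d hd => le_of_not_gt fun hlt => ?_
  have hpos : 0 ≤ Real.log b / Real.log q * lowerDensity p :=
    mul_nonneg (div_nonneg (Real.log_nonneg (by exact_mod_cast hb.le)) (Real.log_nonneg hq.le))
      lowerDensity_nonneg
  rw [hausdorffMeasure_moranSet_eq_zero hv hq hb ((ENNReal.ofReal_lt_coe_iff hpos).1 hlt)] at hd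
  exact ENNReal.zero_ne_top hd

lemma exists_holderOnWith_ofDigits_invFun [Nonempty (ℕ → Fin b)]
    (hv : Pairwise fun a a' => ‖v a - v a'‖ = 1) (hq : 2 < q) (hb : 1 < b) {r : ℝ≥0} {C : ℝ}
    (hC : ∀ n : ℕ, r * Real.log q / Real.log b * n ≤ C + Nat.count p n) :
    ∃ K, HolderOnWith K r (fun x => Real.ofDigits fun j =>
      invFun (fun k => expansion q (v ∘ k)) x (Nat.nth p j)) (moranSet q v p k₀) := by
  have hq0 : 0 < q := by linarith
  have hq1 : 0 < q - 1 := by linarith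
  set γ := (q - 2) / ((q - 1) * q)
  have hγ : 0 < γ := div_pos (by linarith) (by positivity)
  refine ⟨((b : ℝ) ^ C / γ ^ (r : ℝ)).toNNReal, holderOnWith_of_dist_le ?_⟩
  rintro _ ⟨k, -, rfl⟩ _ ⟨k', -, rfl⟩
  rw [Real.dist_eq, ofDigits_invFun_expansion_comp hv hq, ofDigits_invFun_expansion_comp hv hq,
    Real.coe_toNNReal _ (by positivity)]
  rcases eq_or_ne k k' with rfl | hkk'
  · simp only [sub_self, abs_zero, dist_self]
    positivity
  set m := PiNat.firstDiff k k'
  have hdist : γ * (q ^ m)⁻¹ ≤ dist (expansion q (v ∘ k)) (expansion q (v ∘ k')) := by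
    refine le_of_eq_of_le ?_ (le_dist_expansion_comp hv (by linarith) hkk')
    rw [pow_succ]
    simp only [γ, m]
    field_simp
  calc _ ≤ ((b : ℝ) ^ Nat.count p m)⁻¹ :=
        abs_ofDigits_comp_nth_sub_le fun _ hi =>
          PiNat.apply_eq_of_lt_firstDiff (x := k) (y := k') hi
    _ ≤ (b : ℝ) ^ C * ((q ^ m)⁻¹) ^ (r : ℝ) := inv_pow_count_le hb hq0 hC m
    _ = (b : ℝ) ^ C / γ ^ (r : ℝ) * (γ * (q ^ m)⁻¹) ^ (r : ℝ) := by
        rw [Real.mul_rpow hγ.le (by positivity), ← mul_assoc,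
          div_mul_cancel₀ _ (Real.rpow_pos_of_pos hγ _).ne']
    _ ≤ _ := by gcongr

lemma Icc_subset_image_ofDigits_invFun [Nonempty (ℕ → Fin b)]
    (hv : Pairwise fun a a' => ‖v a - v a'‖ = 1) (hq : 2 < q) (hb : 1 < b)
    (hp : {n | p n}.Infinite) :
    Set.Icc 0 1 ⊆ (fun x => Real.ofDigits fun j =>
      invFun (fun k => expansion q (v ∘ k)) x (Nat.nth p j)) '' moranSet q v p k₀ := by
  intro y hy
  obtain ⟨δ, -, rfl⟩ := Real.ofDigits_SurjOn hb hy
  let k i := if p i then δ (Nat.count p i) else k₀ i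
  refine ⟨expansion q (v ∘ k), ⟨k, fun i hi => if_neg hi, rfl⟩, ?_⟩
  simp only [ofDigits_invFun_expansion_comp hv hq, k, if_pos (Nat.nth_mem_of_infinite hp _),
    Nat.count_nth_of_infinite hp]

lemma le_dimH_moranSet [Nonempty (ℕ → Fin b)] (hv : Pairwise fun a a' => ‖v a - v a'‖ = 1)
    (hq : 2 < q) (hb : 1 < b) :
    ENNReal.ofReal (Real.log b / Real.log q * lowerDensity p) ≤ dimH (moranSet q v p k₀) := by
  have hlogq : 0 < Real.log q := Real.log_pos (by linarith)
  have hlogb : 0 < Real.log b := Real.log_pos (by exact_mod_cast hb)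
  refine ENNReal.le_of_forall_nnreal_lt fun r hr => ?_
  rcases eq_or_ne r 0 with rfl | hr0
  · exact zero_le
  rw [ENNReal.lt_ofReal_iff_toReal_lt ENNReal.coe_ne_top, ENNReal.coe_toReal] at hr
  have hrL : r * Real.log q / Real.log b < lowerDensity p := by
    rw [div_lt_iff₀ hlogb]
    rw [div_mul_eq_mul_div, lt_div_iff₀ hlogq] at hr
    linarith
  obtain ⟨C, hC⟩ := exists_le_add_count hrL
  have hp : {n | p n}.Infinite := infinite_setOf_of_lowerDensity_pos
    (lt_of_le_of_lt (by positivity) hrL)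
  obtain ⟨K, hK⟩ := exists_holderOnWith_ofDigits_invFun (k₀ := k₀) hv hq hb hC
  have hone : (1 : ℝ≥0∞) ≤ dimH (moranSet q v p k₀) / r := by
    calc (1 : ℝ≥0∞) = dimH (Set.Icc (0 : ℝ) 1) := by
          rw [← segment_eq_Icc zero_le_one, Real.dimH_segment zero_ne_one]
      _ ≤ _ := dimH_mono (Icc_subset_image_ofDigits_invFun hv hq hb hp)
      _ ≤ _ := hK.dimH_image_le (pos_iff_ne_zero.2 hr0)
  simpa using (ENNReal.le_div_iff_mul_le (.inl (by exact_mod_cast hr0)) (.inl ENNReal.coe_ne_top)).1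
    hone

theorem dimH_moranSet (hv : Pairwise fun a a' => ‖v a - v a'‖ = 1) (hq : 2 < q) (hb : 1 < b) :
    dimH (moranSet q v p k₀) = ENNReal.ofReal (Real.log b / Real.log q * lowerDensity p) :=
  have : Nonempty (ℕ → Fin b) := ⟨k₀⟩
  le_antisymm (dimH_moranSet_le hv (by linarith) hb) (le_dimH_moranSet hv hq hb)

end MoranSet

def gasketVertex : Fin 3 → ℝ × ℝ := ![(0, 0), (0, 1), (1, 0)]

lemma range_gasketVertex : Set.range gasketVertex = Omega1 := by
  ext w
  simp only [gasketVertex, Matrix.range_cons, Matrix.range_empty, Set.union_empty,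
    Set.union_singleton, Set.union_insert, Set.mem_insert_iff, Set.mem_singleton_iff, Omega1]
  tauto

lemma range_gasketVertex_sub :
    Set.range (fun a : Fin 3 × Fin 3 => gasketVertex a.1 - gasketVertex a.2) = Omega2 := by
  refine Set.Subset.antisymm ?_ ?_
  · rintro _ ⟨⟨a, a'⟩, rfl⟩
    fin_cases a <;> fin_cases a' <;> norm_num [gasketVertex, Omega2, Prod.ext_iff]
  · rintro w (rfl | rfl | rfl | rfl | rfl | rfl | rfl)
    exacts [⟨(0, 0), by simp [gasketVertex, Prod.ext_iff]⟩, ⟨(1, 0), by simp [gasketVertex]⟩,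
      ⟨(2, 0), by simp [gasketVertex]⟩, ⟨(0, 2), by simp [gasketVertex]⟩,
      ⟨(1, 2), by simp [gasketVertex]⟩, ⟨(0, 1), by simp [gasketVertex]⟩,
      ⟨(2, 1), by simp [gasketVertex]⟩]

lemma gasketVertex_eq_of_sub_eq {a a' c c' : Fin 3}
    (h : gasketVertex a - gasketVertex a' = gasketVertex c - gasketVertex c') (hne : a ≠ a') :
    a = c := by
  revert h hne
  fin_cases a <;> fin_cases a' <;> fin_cases c <;> fin_cases c' <;>
    norm_num [gasketVertex, Prod.ext_iff]

lemma pairwise_norm_gasketVertex_sub :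
    Pairwise fun a a' => ‖gasketVertex a - gasketVertex a'‖ = 1 := by
  intro a a' h
  fin_cases a <;> fin_cases a' <;> simp_all [gasketVertex, Prod.norm_def]

lemma norm_le_one_of_mem_Omega2 {w : ℝ × ℝ} (hw : w ∈ Omega2) : ‖w‖ ≤ 1 := by
  rcases hw with rfl | rfl | rfl | rfl | rfl | rfl | rfl <;> norm_num [Prod.norm_def]

lemma eq_of_expansion_eq_of_mem_uniqSet {q : ℝ} (hq : 1 < q) {t : ℝ × ℝ} (h1 : t.1 ∈ uniqSet q)
    (h2 : t.2 ∈ uniqSet q) {u w : ℕ → ℝ × ℝ} (hu : ∀ i, u i ∈ Omega2) (hw : ∀ i, w i ∈ Omega2)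
    (hut : expansion q u = t) (hwt : expansion q w = t) : u = w := by
  have key : ∀ L : ℝ × ℝ →L[ℝ] ℝ, (∀ z ∈ Omega2, L z ∈ ({-1, 0, 1} : Set ℝ)) →
      L t ∈ uniqSet q → (fun i => L (u i)) = fun i => L (w i) := by
    intro L hL ht
    refine ht.2.unique ⟨fun i => hL _ (hu i), ?_⟩ ⟨fun i => hL _ (hw i), ?_⟩
    · rw [← hut, L.map_expansion hq fun i => norm_le_one_of_mem_Omega2 (hu i),
        expansion_eq_tsum_div]
    · rw [← hwt, L.map_expansion hq fun i => norm_le_one_of_mem_Omega2 (hw i),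
        expansion_eq_tsum_div]
  have hfst := key (.fst ℝ ℝ ℝ) (fun z hz => by
    rcases hz with rfl | rfl | rfl | rfl | rfl | rfl | rfl <;> norm_num) h1
  have hsnd := key (.snd ℝ ℝ ℝ) (fun z hz => by
    rcases hz with rfl | rfl | rfl | rfl | rfl | rfl | rfl <;> norm_num) h2
  exact funext fun i => Prod.ext (congr_fun hfst i) (congr_fun hsnd i)

lemma gasket_eq_range (q : ℝ) :
    gasket q = Set.range fun k : ℕ → Fin 3 => expansion q (gasketVertex ∘ k) := by
  ext x
  constructor
  · rintro ⟨c, hc, rfl⟩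
    choose k hk using fun i => range_gasketVertex ▸ hc i
    exact ⟨k, by simp only [expansion, comp_apply, hk]⟩
  · rintro ⟨k, rfl⟩
    exact ⟨_, fun i => range_gasketVertex ▸ ⟨k i, rfl⟩, rfl⟩

lemma exists_gasket_inter_image_add_eq_moranSet {q : ℝ} (hq : 2 < q) {t : ℝ × ℝ}
    (h1 : t.1 ∈ uniqSet q) (h2 : t.2 ∈ uniqSet q) {ts : ℕ → ℝ × ℝ} (hts : ∀ i, ts i ∈ Omega2)
    (hexp : t = expansion q ts) :
    ∃ k₀, gasket q ∩ ((· + t) '' gasket q) = moranSet q gasketVertex (fun i => ts i = 0) k₀ := by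
  have hq1 : 1 < q := by linarith
  choose a ha using fun i => range_gasketVertex_sub ▸ hts i
  refine ⟨fun i => (a i).1, Set.Subset.antisymm ?_ ?_⟩
  · rintro x ⟨hx, y, hy, rfl⟩
    rw [gasket_eq_range] at hx hy
    obtain ⟨k, hk⟩ := hx
    obtain ⟨k', rfl⟩ := hy
    beta_reduce at hk
    have hdigits : (fun i => gasketVertex (k i) - gasketVertex (k' i)) = ts := by
      refine eq_of_expansion_eq_of_mem_uniqSet hq1 h1 h2
        (fun i => range_gasketVertex_sub ▸ ⟨(k i, k' i), rfl⟩) hts ?_ hexp.symm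
      rw [← expansion_comp_sub_expansion_comp hq1, hk, add_sub_cancel_left]
    refine ⟨k, fun i hi => gasketVertex_eq_of_sub_eq ((congr_fun hdigits i).trans (ha i).symm)
      fun hkk' => hi ?_, hk⟩
    show ts i = 0
    rw [← congr_fun hdigits i, hkk', sub_self]
  · rintro _ ⟨k, hk, rfl⟩
    let k' i := if ts i = 0 then k i else (a i).2
    refine ⟨(gasket_eq_range q).ge ⟨k, rfl⟩, _, (gasket_eq_range q).ge ⟨k', rfl⟩, ?_⟩
    show expansion q (gasketVertex ∘ k') + t = expansion q (gasketVertex ∘ k)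
    rw [← eq_sub_iff_add_eq', expansion_comp_sub_expansion_comp hq1, hexp]
    congr 1
    ext1 i
    by_cases hi : ts i = 0
    · simp [k', hi]
    · simp only [k', if_neg hi, hk i hi, ha i]

theorem stmt3 (q : ℝ) (hq : q ∈ Set.Ioo (2 : ℝ) 3) (t : ℝ × ℝ) (ht : t ∈ Tset q)
    (ts : ℕ → ℝ × ℝ) (hts : ∀ i, ts i ∈ Omega2)
    (hexp : t = ∑' i, (q ^ (i + 1))⁻¹ • ts i) :
    dimH (gasket q ∩ ((· + t) '' gasket q)) =
      ENNReal.ofReal (Real.log 3 / Real.log q *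
        Filter.liminf (fun n : ℕ =>
          (((Finset.range n).filter fun i => ts i = ((0 : ℝ), (0 : ℝ))).card : ℝ) / n)
          Filter.atTop) := by
  obtain ⟨-, ht1, ht2⟩ := ht
  obtain ⟨k₀, hk₀⟩ := exists_gasket_inter_image_add_eq_moranSet hq.1 ht1 ht2 hts hexp
  rw [hk₀, dimH_moranSet pairwise_norm_gasketVertex_sub hq.1 (by norm_num), lowerDensity]
  simp only [Nat.count_eq_card_filter_range, Nat.cast_ofNat, Prod.mk_zero_zero]
end
end

section
/- For every integer n≥0, the proportion of zero letters in the word ε_n satisfies d*(ε_n) = −∑_{i=1}^{n}(−1/2)^i. -/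
open scoped Pointwise ENNReal
open Filter

noncomputable section

lemma tm_le (n : ℕ) : tm n ≤ 1 := by
  induction n using Nat.strong_induction_on with
  | _ n ih =>
    match n with
    | 0 => simp [tm]
    | m + 1 =>
      rw [tm]
      have := ih ((m + 1) / 2) (by omega)
      split <;> omega

lemma tm_two_mul (k : ℕ) : tm (2 * k) = tm k := by
  match k with
  | 0 => rfl
  | m + 1 =>
    show tm (2 * m + 1 + 1) = tm (m + 1)
    rw [tm]
    have h1 : (2 * m + 1 + 1) % 2 = 0 := by omega
    have h2 : (2 * m + 1 + 1) / 2 = m + 1 := by omega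
    simp [h1, h2]

lemma tm_odd (k : ℕ) : tm (2 * k + 1) = 1 - tm k := by
  rw [tm]
  have h1 : (2 * k + 1) % 2 = 1 := by omega
  have h2 : (2 * k + 1) / 2 = k := by omega
  simp [h1, h2]

lemma lam_odd (i : ℕ) : lam (2 * i + 1) ≠ 0 := by
  have h := tm_le i
  simp only [lam, show 2 * i + 1 - 1 = 2 * i from rfl, tm_odd, tm_two_mul]
  omega

lemma lam_even (i : ℕ) : lam (2 * i + 2) = 0 ↔ lam (i + 1) ≠ 0 := by
  have h1 := tm_le i
  have h2 := tm_le (i + 1)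
  have e1 : lam (2 * i + 2) = (tm (i + 1) : ℤ) - ((1 - tm i : ℕ) : ℤ) := by
    rw [show lam (2 * i + 2) = (tm (2 * (i + 1)) : ℤ) - (tm (2 * i + 1) : ℤ) from rfl,
      tm_two_mul, tm_odd]
  have e2 : lam (i + 1) = (tm (i + 1) : ℤ) - (tm i : ℤ) := rfl
  rw [e1, e2]
  omega

lemma count_eq_sum (N : ℕ) :
    ((((List.range N).map fun i => lam (i + 1)).count 0 : ℤ)) =
      ∑ i ∈ Finset.range N, if lam (i + 1) = 0 then (1 : ℤ) else 0 := by
  induction N with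
  | zero => simp
  | succ m ih =>
    rw [List.range_succ, List.map_append, List.count_append, Finset.sum_range_succ, ← ih]
    simp only [List.map_cons, List.map_nil]
    by_cases h : lam (m + 1) = 0 <;> simp [h, List.count_cons] <;> push_cast <;> ring

lemma sum_pair (f : ℕ → ℤ) (m : ℕ) :
    ∑ i ∈ Finset.range (2 * m), f i = ∑ i ∈ Finset.range m, (f (2 * i) + f (2 * i + 1)) := by
  induction m with
  | zero => simp
  | succ k ih =>
    rw [show 2 * (k + 1) = 2 * k + 1 + 1 from rfl, Finset.sum_range_succ,
      Finset.sum_range_succ, Finset.sum_range_succ, ih]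
    ring

lemma sum_rec (n : ℕ) :
    (∑ i ∈ Finset.range (2 ^ (n + 1)), if lam (i + 1) = 0 then (1 : ℤ) else 0) =
      2 ^ n - ∑ i ∈ Finset.range (2 ^ n), if lam (i + 1) = 0 then (1 : ℤ) else 0 := by
  rw [show (2 : ℕ) ^ (n + 1) = 2 * 2 ^ n from by ring,
    sum_pair (fun i => if lam (i + 1) = 0 then (1 : ℤ) else 0)]
  have : ∀ i ∈ Finset.range (2 ^ n),
      ((if lam (2 * i + 1) = 0 then (1 : ℤ) else 0) +
        (if lam (2 * i + 1 + 1) = 0 then (1 : ℤ) else 0)) =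
      1 - (if lam (i + 1) = 0 then (1 : ℤ) else 0) := by
    intro i _
    have h1 := lam_odd i
    have h2 := lam_even i
    by_cases h : lam (i + 1) = 0 <;>
      simp [h1, show 2 * i + 1 + 1 = 2 * i + 2 from rfl, h2, h]
  rw [Finset.sum_congr rfl this, Finset.sum_sub_distrib]
  simp

lemma S_closed (n : ℕ) :
    3 * (∑ i ∈ Finset.range (2 ^ n), if lam (i + 1) = 0 then (1 : ℤ) else 0) =
      2 ^ n - (-1) ^ n := by
  induction n with
  | zero =>
    have h0 : tm 0 = 0 := by simp [tm]
    have h1 : tm 1 = 1 := by have := tm_odd 0; simpa [h0] using this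
    have h : lam 1 = 1 := by simp [lam, h0, h1]
    rw [pow_zero, pow_zero, Finset.range_one, Finset.sum_singleton]
    simp [h]
  | succ m ih =>
    rw [sum_rec]
    have : ((-1 : ℤ)) ^ (m + 1) = -(-1) ^ m := by ring
    rw [this]
    push_cast
    ring_nf
    ring_nf at ih
    omega

lemma rhs_closed (n : ℕ) :
    -∑ i ∈ Finset.Icc 1 n, (-(1 / 2) : ℝ) ^ i = (1 - (-(1 / 2) : ℝ) ^ n) / 3 := by
  induction n with
  | zero => simp
  | succ m ih =>
    rw [← Finset.Ico_add_one_right_eq_Icc, Finset.sum_Ico_succ_top (by omega), Finset.Ico_add_one_right_eq_Icc,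
      pow_succ]
    set x : ℝ := ∑ i ∈ Finset.Icc 1 m, (-(1 / 2) : ℝ) ^ i with hx
    set y : ℝ := (-(1 / 2) : ℝ) ^ m with hy
    linarith

theorem stmt4 (n : ℕ) :
    (((eps n).count 0 : ℝ)) / (eps n).length =
      -∑ i ∈ Finset.Icc 1 n, (-(1 / 2) : ℝ) ^ i := by
  have hc : (((eps n).count 0 : ℤ)) =
      ∑ i ∈ Finset.range (2 ^ n), if lam (i + 1) = 0 then (1 : ℤ) else 0 :=
    count_eq_sum (2 ^ n)
  have h3 : 3 * (((eps n).count 0 : ℤ)) = 2 ^ n - (-1) ^ n := by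
    rw [hc]; exact S_closed n
  have hlen : (eps n).length = 2 ^ n := by simp [eps]
  rw [hlen, rhs_closed]
  have hcr : (((eps n).count 0 : ℝ)) = ((2 : ℝ) ^ n - (-1) ^ n) / 3 := by
    have := congrArg (Int.cast : ℤ → ℝ) h3
    push_cast at this
    linarith
  rw [hcr]
  have h2 : ((2 : ℝ) ^ n) ≠ 0 := by positivity
  have hr : (-(1 / 2) : ℝ) ^ n = (-1) ^ n / 2 ^ n := by
    rw [show (-(1 / 2) : ℝ) = (-1) / 2 from by norm_num, div_pow]
  rw [hr, div_div,
    show (1 - (-1 : ℝ) ^ n / 2 ^ n) = ((2 : ℝ) ^ n - (-1) ^ n) / 2 ^ n from by field_simp,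
    div_div, mul_comm]
  push_cast
  ring

end
end

section
/- For every n≥1, the sequence E_{n,n}^{2^n}=(σ^{2^n}((ε_n 𝜀̄_n)^∞),(ε_n 𝜀̄_n)^∞) belongs to Ω2^ℕ and contains infinitely many occurrences of the letter (0,0). -/
open scoped Pointwise ENNReal
open Filter

noncomputable section

lemma tm_le_one (k : ℕ) : tm k ≤ 1 := by
  induction k using Nat.strong_induction_on with
  | _ k ih =>
    match k with
    | 0 => simp [tm]
    | n + 1 =>
      rw [tm]
      split
      · exact ih _ (by omega)
      · omega

lemma lam_mem (i : ℕ) : lam i = -1 ∨ lam i = 0 ∨ lam i = 1 := by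
  have h1 := tm_le_one i
  have h2 := tm_le_one (i - 1)
  unfold lam
  omega

lemma reflect_getD (u : List ℤ) (r : ℕ) :
    (reflect u).getD r 0 = - u.getD r 0 := by
  simp only [reflect, List.getD_eq_getElem?_getD, List.getElem?_map]
  cases u[r]? <;> simp

lemma per_shift (u : List ℤ) (hu : 0 < u.length) (j : ℕ) :
    per (u ++ reflect u) (j + u.length) = - per (u ++ reflect u) j := by
  have hlw : (u ++ reflect u).length = u.length + u.length := by simp [reflect]
  unfold per
  rw [hlw]
  set L := u.length with hL
  set r := j % (L + L) with hr
  have hrlt : r < L + L := Nat.mod_lt _ (by omega)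
  have hshift : (j + L) % (L + L) = if r < L then r + L else r - L := by
    have h1 : (j + L) % (L + L) = (r + L) % (L + L) := by
      conv_lhs => rw [Nat.add_mod, ← hr, Nat.mod_eq_of_lt (show L < L + L by omega)]
    split
    · next h => exact h1.trans (Nat.mod_eq_of_lt (by omega))
    · next h =>
      rw [h1, Nat.mod_eq_sub_mod (by omega)]
      have h2 : r + L - (L + L) = r - L := by omega
      rw [h2, Nat.mod_eq_of_lt (by omega)]
  rw [hshift]
  by_cases h : r < L
  · rw [if_pos h, List.getD_append _ _ _ _ (by omega : r < u.length),
      List.getD_append_right _ _ _ _ (by omega : u.length ≤ r + L)]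
    have : r + L - u.length = r := by omega
    rw [this, reflect_getD]
  · rw [if_neg h, List.getD_append _ _ _ _ (by omega : r - L < u.length),
      List.getD_append_right _ _ _ _ (by omega : u.length ≤ r)]
    have : r - u.length = r - L := by omega
    rw [this, reflect_getD, neg_neg]

lemma per_mem (u : List ℤ) (hu : ∀ x ∈ u, x = -1 ∨ x = 0 ∨ x = 1) (j : ℕ) :
    per u j = -1 ∨ per u j = 0 ∨ per u j = 1 := by
  unfold per
  by_cases h : j % u.length < u.length
  · exact hu _ (by rw [List.getD_eq_getElem _ _ h]; exact List.getElem_mem h)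
  · rw [List.getD_eq_default _ _ (by omega)]
    simp

lemma eps_mem (n : ℕ) : ∀ x ∈ eps n ++ reflect (eps n), x = -1 ∨ x = 0 ∨ x = 1 := by
  intro x hx
  rcases List.mem_append.1 hx with h | h
  · simp only [eps, List.mem_map, List.mem_range] at h
    obtain ⟨i, -, rfl⟩ := h
    exact lam_mem _
  · simp only [reflect, eps, List.mem_map, List.mem_range] at h
    obtain ⟨y, ⟨i, -, rfl⟩, rfl⟩ := h
    rcases lam_mem (i + 1) with h | h | h <;> simp [h]

lemma eps_length (n : ℕ) : (eps n).length = 2 ^ n := by simp [eps]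

theorem stmt7 (n : ℕ) (hn : 1 ≤ n) :
    (∀ j, Eseq n n (2 ^ n) j ∈ Omega2Z) ∧
      {j | Eseq n n (2 ^ n) j = (0, 0)}.Infinite := by
  set w := eps n ++ reflect (eps n) with hw
  have hsh : ∀ j, per w (j + 2 ^ n) = - per w j := by
    intro j
    have := per_shift (eps n) (by rw [eps_length]; positivity) j
    rwa [eps_length] at this
  have hn1 : 1 < (eps n).length := by
    rw [eps_length]
    calc 1 < 2 ^ 1 := by norm_num
    _ ≤ 2 ^ n := Nat.pow_le_pow_right (by norm_num) hn
  have hlen : w.length = 2 ^ (n + 1) := by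
    have : (reflect (eps n)).length = (eps n).length := by simp [reflect]
    rw [hw, List.length_append, this, eps_length, pow_succ]
    omega
  have hlam2 : lam 2 = 0 := by simp [lam, tm]
  have hw1 : ∀ k : ℕ, per w (1 + k * 2 ^ (n + 1)) = 0 := by
    intro k
    unfold per
    rw [hlen, Nat.add_mul_mod_self_right,
      Nat.mod_eq_of_lt (show 1 < 2 ^ (n + 1) from Nat.one_lt_two_pow (by omega)),
      hw, List.getD_append _ _ _ _ hn1, List.getD_eq_getElem _ _ hn1]
    simp [eps, hlam2]
  constructor
  · intro j
    show (per w (j + 2 ^ n), per w j) ∈ Omega2Z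
    rw [hsh]
    rcases per_mem w (eps_mem n) j with h | h | h <;> simp [Omega2Z, h]
  · apply Set.infinite_of_injective_forall_mem (f := fun k : ℕ => 1 + k * 2 ^ (n + 1))
    · intro a b hab
      simp only at hab
      have h2 : (0:ℕ) < 2 ^ (n + 1) := by positivity
      exact Nat.eq_of_mul_eq_mul_right h2 (by omega)
    · intro k
      show Eseq n n (2 ^ n) (1 + k * 2 ^ (n + 1)) = (0, 0)
      show (per w (1 + k * 2 ^ (n + 1) + 2 ^ n), per w (1 + k * 2 ^ (n + 1))) = (0, 0)
      rw [hsh, hw1]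
      norm_num

end
end
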